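/- arXiv:2102.11685 — 2 statements merged into one kernel-verified Lean document; each statement's English description precedes it below -/
import Mathlib

section
/- There exists a constant C > 0 (independent of u and g) with the following property. Let u : [0,1] × ℝ³ → ℝ be continuous and 1-periodic in each of the three spatial coordinates. Assume that on (0,1] × ℝ³ the partial derivative ∂ₜu and all second spatial partial derivatives of u exist and are continuous, and that there is a bounded measurable function g : (0,1] × ℝ³ → ℝ such that ∂ₜu(t,x) − Δu(t,x) = −u(t,x)³ + g(t,x) for every (t,x) ∈ (0,1] × ℝ³, where Δu denotes the sum of the second partial derivatives of u in the three spatial variables. Then for every (t,x) ∈ (0,1] × ℝ³ one has |u(t,x)| ≤ C · max( t^{−1/2} , ‖g‖_∞^{1/3} ), where ‖g‖_∞ = sup_{(s,y) ∈ (0,1]×ℝ³} |g(s,y)|. -/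
/-!
For `B = ‖g‖_∞^{1/3}` the function `φ t = t^{-1/2} + B` satisfies `φ' ≥ -φ³ + B³`, because
`(p + B)³ ≥ p³ + B³`, and it is infinite at `t = 0`. If `u > φ` somewhere, then `u - φ`, which is
periodic in space and tends to `-∞` as `t → 0`, attains a positive maximum on `(0,1] × ℝ³`. There
`∂ₜu ≥ φ'`, `Δu ≤ 0` and `u > φ`, so `φ' ≤ ∂ₜu ≤ -u³ + B³ < -φ³ + B³ ≤ φ'`. The same argument
applied to `-u` gives `|u| ≤ t^{-1/2} + B`.
-/

open Set Filter Topology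

section Periodic

variable {ι α : Type*} [Fintype ι] [DecidableEq ι] {f : (ι → ℝ) → α}

theorem map_add_intCast_of_periodic (hf : ∀ x i, f (x + Pi.single i 1) = f x)
    (x : ι → ℝ) (n : ι → ℤ) : f (x + fun i => (n i : ℝ)) = f x := by
  have hcoord (i : ι) (k : ℤ) (y : ι → ℝ) : f (y + Pi.single i (k : ℝ)) = f y := by
    have hper : Function.Periodic (fun s : ℝ => f (y + Pi.single i s)) 1 := fun s => by
      simpa only [Pi.single_add, ← add_assoc] using hf (y + Pi.single i s) i
    simpa using hper.int_mul k 0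
  rw [← Finset.univ_sum_single fun i => (n i : ℝ)]
  induction (Finset.univ : Finset ι) using Finset.induction_on with
  | empty => simp
  | insert k s hk ih =>
    rw [Finset.sum_insert hk, add_comm (Pi.single k _), ← add_assoc, hcoord, ih]

theorem map_fract_of_periodic (hf : ∀ x i, f (x + Pi.single i 1) = f x) (x : ι → ℝ) :
    f (fun i => Int.fract (x i)) = f x := by
  simpa [Int.fract, sub_eq_add_neg, Pi.add_def] using
    map_add_intCast_of_periodic hf x fun i => -⌊x i⌋

variable {X : Type*} {F : X × (ι → ℝ) → ℝ} {K : Set X}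

theorem image_prod_univ_eq_image_prod_Icc_of_periodic
    (hF : ∀ p i, F (p.1, p.2 + Pi.single i 1) = F p) :
    F '' (K ×ˢ univ) = F '' (K ×ˢ Icc 0 1) := by
  refine (image_mono (prod_mono le_rfl (subset_univ _))).antisymm' ?_
  rintro _ ⟨⟨t, x⟩, ⟨ht, -⟩, rfl⟩
  refine ⟨(t, fun i => Int.fract (x i)), ⟨ht, ?_, ?_⟩, ?_⟩
  · exact fun i => Int.fract_nonneg _
  · exact fun i => (Int.fract_lt_one _).le
  · exact map_fract_of_periodic (f := fun y => F (t, y)) (fun y i => hF (t, y) i) x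

variable [TopologicalSpace X]

theorem IsCompact.exists_isMaxOn_prod_univ_of_periodic (hK : IsCompact K) (hne : K.Nonempty)
    (hcont : ContinuousOn F (K ×ˢ univ)) (hF : ∀ p i, F (p.1, p.2 + Pi.single i 1) = F p) :
    ∃ p ∈ K ×ˢ univ, IsMaxOn F (K ×ˢ univ) p := by
  obtain ⟨p, hp, hmax⟩ := (hK.prod isCompact_Icc).exists_isMaxOn
    (hne.prod (nonempty_Icc.2 zero_le_one)) (hcont.mono (prod_mono le_rfl (subset_univ _)))
  refine ⟨p, ⟨hp.1, mem_univ _⟩, fun q hq => ?_⟩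
  obtain ⟨q', hq', hFq⟩ : F q ∈ F '' (K ×ˢ Icc 0 1) :=
    image_prod_univ_eq_image_prod_Icc_of_periodic hF ▸ mem_image_of_mem F hq
  show F q ≤ F p
  exact hFq ▸ hmax hq'

theorem IsCompact.exists_bound_prod_univ_of_periodic (hK : IsCompact K)
    (hcont : ContinuousOn F (K ×ˢ univ)) (hF : ∀ p i, F (p.1, p.2 + Pi.single i 1) = F p) :
    ∃ C, ∀ p ∈ K ×ˢ univ, |F p| ≤ C := by
  obtain ⟨C, hC⟩ := (hK.prod isCompact_Icc).exists_bound_of_continuousOn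
    (hcont.mono (prod_mono le_rfl (subset_univ _)))
  refine ⟨C, fun q hq => ?_⟩
  obtain ⟨q', hq', hFq⟩ : F q ∈ F '' (K ×ˢ Icc 0 1) :=
    image_prod_univ_eq_image_prod_Icc_of_periodic hF ▸ mem_image_of_mem F hq
  exact hFq ▸ hC q' hq'

end Periodic

section ExtremumTests

variable {f f' : ℝ → ℝ} {a b f'' : ℝ}

theorem IsLocalMaxOn.hasDerivWithinAt_nonneg {s : Set ℝ} {d : ℝ} (h : IsLocalMaxOn f s b)
    (hf : HasDerivWithinAt f d s b) (hab : a < b) (hs : Icc a b ⊆ s) : 0 ≤ d := by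
  have hcone : a - b ∈ posTangentConeAt s b := by
    refine sub_mem_posTangentConeAt_of_segment_subset ?_
    rwa [segment_symm, segment_eq_Icc hab.le]
  have hnonpos := h.hasFDerivWithinAt_nonpos hf.hasFDerivWithinAt hcone
  rw [ContinuousLinearMap.toSpanSingleton_apply, smul_eq_mul] at hnonpos
  exact nonneg_of_mul_nonpos_right hnonpos (sub_neg.mpr hab)

theorem IsLocalMax.nonpos_of_hasDerivAt_of_hasDerivAt (h : IsLocalMax f a)
    (hf : ∀ x, HasDerivAt f (f' x) x) (hf' : HasDerivAt f' f'' a) : f'' ≤ 0 := by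
  by_contra! hpos
  have hcrit : f' a = 0 := h.hasDerivAt_eq_zero (hf a)
  have hright : ∀ᶠ x in 𝓝[>] a, 0 < f' x := by
    have hslope := (hasDerivAt_iff_tendsto_slope.mp hf').mono_left (nhdsGT_le_nhdsNE a)
    filter_upwards [hslope.eventually (eventually_gt_nhds hpos), self_mem_nhdsWithin]
      with x hx hax using pos_of_slope_pos hax hx hcrit
  obtain ⟨b, hab, hb⟩ := mem_nhdsGT_iff_exists_Ioo_subset.mp hright
  have hmono : StrictMonoOn f (Icc a b) := by
    refine strictMonoOn_of_deriv_pos (convex_Icc a b)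
      (fun x _ => (hf x).continuousAt.continuousWithinAt) fun x hx => ?_
    rw [interior_Icc] at hx
    exact (hf x).deriv ▸ hb hx
  obtain ⟨x, hx, hfx⟩ := (Eventually.and (Ioo_mem_nhdsGT (mem_Ioi.mp hab))
    (h.filter_mono nhdsWithin_le_nhds)).exists
  exact (hmono ⟨le_rfl, hab.le⟩ ⟨hx.1.le, hx.2.le⟩ hx.1).not_ge hfx

end ExtremumTests

section MaximumPrinciple

variable {ι : Type*} [Fintype ι] [DecidableEq ι]

theorem sum_secondPartial_nonpos_of_isMaxOn {v : (ι → ℝ) → ℝ} {vx : ι → (ι → ℝ) → ℝ}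
    {vxx : ι → ℝ} {x : ι → ℝ} (hmax : IsMaxOn v univ x)
    (hvx : ∀ i y, HasDerivAt (fun s => v (Function.update y i s)) (vx i y) (y i))
    (hvxx : ∀ i, HasDerivAt (fun s => vx i (Function.update x i s)) (vxx i) (x i)) :
    ∑ i, vxx i ≤ 0 := by
  refine Finset.sum_nonpos fun i _ => ?_
  have hline : IsLocalMax (fun s => v (Function.update x i s)) (x i) := by
    refine (IsMaxOn.isLocalMax (s := univ) (fun s _ => ?_) univ_mem)
    simpa using hmax (mem_univ (Function.update x i s))
  refine hline.nonpos_of_hasDerivAt_of_hasDerivAt (fun s => ?_) (hvxx i)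
  simpa using hvx i (Function.update x i s)

variable {T : ℝ} {u : ℝ → (ι → ℝ) → ℝ} {φ : ℝ → ℝ}

theorem exists_isMaxOn_sub_of_tendsto_atTop
    (hu : ContinuousOn (fun p : ℝ × (ι → ℝ) => u p.1 p.2) (Icc 0 T ×ˢ univ))
    (hper : ∀ t x i, u t (x + Pi.single i 1) = u t x)
    (hφ : ContinuousOn φ (Ioc 0 T)) (hφ0 : Tendsto φ (𝓝[>] 0) atTop)
    {t₀ : ℝ} (ht₀ : t₀ ∈ Ioc 0 T) {x₀ : ι → ℝ} (hx₀ : φ t₀ < u t₀ x₀) :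
    ∃ t ∈ Ioc 0 T, ∃ x, φ t < u t x ∧
      IsMaxOn (fun p : ℝ × (ι → ℝ) => u p.1 p.2 - φ p.1) (Ioc 0 T ×ˢ univ) (t, x) := by
  set F := fun p : ℝ × (ι → ℝ) => u p.1 p.2 - φ p.1
  have hFper : ∀ p i, F (p.1, p.2 + Pi.single i 1) = F p := fun p i => by simp [F, hper]
  obtain ⟨M, hM⟩ := isCompact_Icc.exists_bound_prod_univ_of_periodic hu fun p i => hper p.1 p.2 i
  obtain ⟨ε, hε, hφM⟩ := mem_nhdsGT_iff_exists_Ioo_subset.mp (hφ0.eventually_gt_atTop M)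
  have hδ : 0 < min ε t₀ := lt_min hε ht₀.1
  have hsub : Icc (min ε t₀) T ⊆ Ioc 0 T := fun s hs => ⟨hδ.trans_le hs.1, hs.2⟩
  have hFcont : ContinuousOn F (Icc (min ε t₀) T ×ˢ univ) :=
    (hu.mono (prod_mono (fun s hs => Ioc_subset_Icc_self (hsub hs)) le_rfl)).sub
      ((hφ.mono hsub).comp continuousOn_fst fun p hp => hp.1)
  obtain ⟨⟨t, x⟩, ⟨ht, -⟩, hmax⟩ := isCompact_Icc.exists_isMaxOn_prod_univ_of_periodic
    ⟨t₀, min_le_right _ _, ht₀.2⟩ hFcont hFper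
  have hpos : 0 < F (t, x) := (sub_pos.mpr hx₀).trans_le
    (hmax (show (t₀, x₀) ∈ _ from ⟨⟨min_le_right _ _, ht₀.2⟩, mem_univ x₀⟩))
  refine ⟨t, hsub ht, x, sub_pos.mp hpos, fun q hq => ?_⟩
  rcases le_or_gt (min ε t₀) q.1 with hq1 | hq1
  · exact hmax ⟨⟨hq1, hq.1.2⟩, mem_univ _⟩
  · have hφq : M < φ q.1 := hφM ⟨hq.1.1, hq1.trans_le (min_le_left _ _)⟩
    have huq := (abs_le.mp (hM q ⟨Ioc_subset_Icc_self hq.1, mem_univ _⟩)).2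
    show F q ≤ F (t, x)
    simp only [F] at hpos ⊢
    linarith

end MaximumPrinciple

section ComparisonPrinciple

variable {ι : Type*} [Fintype ι] [DecidableEq ι] {T : ℝ} {u ut : ℝ → (ι → ℝ) → ℝ}
  {ux : ι → ℝ → (ι → ℝ) → ℝ} {uxx : ι → ι → ℝ → (ι → ℝ) → ℝ}

theorem le_of_subsolution_of_supersolution {G φ φ' : ℝ → ℝ}
    (hu : ContinuousOn (fun p : ℝ × (ι → ℝ) => u p.1 p.2) (Icc 0 T ×ˢ univ))
    (hper : ∀ t x i, u t (x + Pi.single i 1) = u t x)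
    (hut : ∀ x, ∀ t ∈ Ioc 0 T, HasDerivWithinAt (fun s => u s x) (ut t x) (Ioc 0 T) t)
    (hux : ∀ i, ∀ t ∈ Ioc 0 T, ∀ x,
      HasDerivAt (fun s => u t (Function.update x i s)) (ux i t x) (x i))
    (huxx : ∀ i, ∀ t ∈ Ioc 0 T, ∀ x,
      HasDerivAt (fun s => ux i t (Function.update x i s)) (uxx i i t x) (x i))
    (hG : StrictAnti G) (hsub : ∀ t ∈ Ioc 0 T, ∀ x, ut t x - ∑ i, uxx i i t x ≤ G (u t x))
    (hφ : ∀ t ∈ Ioc 0 T, HasDerivAt φ (φ' t) t) (hsuper : ∀ t ∈ Ioc 0 T, G (φ t) ≤ φ' t)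
    (hφ0 : Tendsto φ (𝓝[>] 0) atTop) :
    ∀ t ∈ Ioc 0 T, ∀ x, u t x ≤ φ t := by
  intro t₀ ht₀ x₀
  by_contra! hx₀
  obtain ⟨t, ht, x, hlt, hmax⟩ := exists_isMaxOn_sub_of_tendsto_atTop hu hper
    (fun s hs => (hφ s hs).continuousAt.continuousWithinAt) hφ0 ht₀ hx₀
  have htime : 0 ≤ ut t x - φ' t := by
    have hslice : IsMaxOn (fun s => u s x - φ s) (Ioc 0 T) t :=
      hmax.comp_mapsTo (g := fun s => (s, x)) (fun s hs => ⟨hs, mem_univ x⟩) rfl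
    exact hslice.localize.hasDerivWithinAt_nonneg ((hut x t ht).sub (hφ t ht).hasDerivWithinAt)
      (half_lt_self ht.1) fun s hs => ⟨(half_pos ht.1).trans_le hs.1, hs.2.trans ht.2⟩
  have hspace : ∑ i, uxx i i t x ≤ 0 := by
    refine sum_secondPartial_nonpos_of_isMaxOn (v := u t) (fun y _ => ?_) (hux · t ht)
      (huxx · t ht x)
    simpa using hmax (show (t, y) ∈ Ioc 0 T ×ˢ univ from ⟨ht, mem_univ y⟩)
  linarith [hsub t ht x, hsuper t ht, hG hlt]

end ComparisonPrinciple

theorem neg_rpow_neg_half_add_cube_le {t B : ℝ} (ht : 0 < t) (hB : 0 ≤ B) :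
    -(t ^ (-(1:ℝ)/2) + B) ^ 3 + B ^ 3 ≤ -(1:ℝ)/2 * t ^ (-(1:ℝ)/2 - 1) := by
  have hp : 0 < t ^ (-(1:ℝ)/2) := Real.rpow_pos_of_pos ht _
  have hcube : t ^ (-(1:ℝ)/2 - 1) = (t ^ (-(1:ℝ)/2)) ^ 3 := by
    rw [← Real.rpow_natCast, ← Real.rpow_mul ht.le]
    norm_num
  rw [hcube]
  nlinarith [mul_nonneg (mul_nonneg hp.le hp.le) hB, mul_nonneg (mul_nonneg hp.le hB) hB]

section CubicHeat

variable {ι : Type*} [Fintype ι] [DecidableEq ι] {T B : ℝ} {u ut : ℝ → (ι → ℝ) → ℝ}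
  {ux : ι → ℝ → (ι → ℝ) → ℝ} {uxx : ι → ι → ℝ → (ι → ℝ) → ℝ}

theorem le_rpow_neg_half_add_of_cubic_heat_subsolution (hB : 0 ≤ B)
    (hu : ContinuousOn (fun p : ℝ × (ι → ℝ) => u p.1 p.2) (Icc 0 T ×ˢ univ))
    (hper : ∀ t x i, u t (x + Pi.single i 1) = u t x)
    (hut : ∀ x, ∀ t ∈ Ioc 0 T, HasDerivWithinAt (fun s => u s x) (ut t x) (Ioc 0 T) t)
    (hux : ∀ i, ∀ t ∈ Ioc 0 T, ∀ x,
      HasDerivAt (fun s => u t (Function.update x i s)) (ux i t x) (x i))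
    (huxx : ∀ i, ∀ t ∈ Ioc 0 T, ∀ x,
      HasDerivAt (fun s => ux i t (Function.update x i s)) (uxx i i t x) (x i))
    (hsub : ∀ t ∈ Ioc 0 T, ∀ x, ut t x - ∑ i, uxx i i t x ≤ -(u t x) ^ 3 + B ^ 3) :
    ∀ t ∈ Ioc 0 T, ∀ x, u t x ≤ t ^ (-(1:ℝ)/2) + B := by
  have hG : StrictAnti fun v : ℝ => -v ^ 3 + B ^ 3 := fun a b hab => by
    linarith [(Odd.strictMono_pow (by decide : Odd 3)) hab]
  refine le_of_subsolution_of_supersolution hu hper hut hux huxx hG hsub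
    (fun t ht => (Real.hasDerivAt_rpow_const (Or.inl ht.1.ne')).add_const B)
    (fun t ht => neg_rpow_neg_half_add_cube_le ht.1 hB) ?_
  exact (tendsto_rpow_neg_nhdsGT_zero (by norm_num)).atTop_add tendsto_const_nhds

theorem abs_le_rpow_neg_half_add_of_cubic_heat {g : ℝ → (ι → ℝ) → ℝ} {Mg : ℝ}
    (hu : ContinuousOn (fun p : ℝ × (ι → ℝ) => u p.1 p.2) (Icc 0 T ×ˢ univ))
    (hper : ∀ t x i, u t (x + Pi.single i 1) = u t x)
    (hut : ∀ x, ∀ t ∈ Ioc 0 T, HasDerivWithinAt (fun s => u s x) (ut t x) (Ioc 0 T) t)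
    (hux : ∀ i, ∀ t ∈ Ioc 0 T, ∀ x,
      HasDerivAt (fun s => u t (Function.update x i s)) (ux i t x) (x i))
    (huxx : ∀ i, ∀ t ∈ Ioc 0 T, ∀ x,
      HasDerivAt (fun s => ux i t (Function.update x i s)) (uxx i i t x) (x i))
    (hg : ∀ t ∈ Ioc 0 T, ∀ x, |g t x| ≤ Mg)
    (hpde : ∀ t ∈ Ioc 0 T, ∀ x, ut t x - ∑ i, uxx i i t x = -(u t x) ^ 3 + g t x) :
    ∀ t ∈ Ioc 0 T, ∀ x, |u t x| ≤ t ^ (-(1:ℝ)/2) + Mg ^ ((1:ℝ)/3) := by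
  intro t ht x
  have hMg : 0 ≤ Mg := (abs_nonneg _).trans (hg t ht x)
  have hB : 0 ≤ Mg ^ ((1:ℝ)/3) := Real.rpow_nonneg hMg _
  have hB3 : (Mg ^ ((1:ℝ)/3)) ^ 3 = Mg := by
    rw [← Real.rpow_natCast, ← Real.rpow_mul hMg]
    norm_num
  have hupper := le_rpow_neg_half_add_of_cubic_heat_subsolution hB hu hper hut hux huxx
    (fun s hs y => by linarith [hpde s hs y, (abs_le.mp (hg s hs y)).2]) t ht x
  have hlower := le_rpow_neg_half_add_of_cubic_heat_subsolution (u := fun s y => -u s y)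
    (ut := fun s y => -ut s y) (ux := fun i s y => -ux i s y) (uxx := fun i j s y => -uxx i j s y)
    hB hu.neg (fun s y i => by simp only [hper]) (fun y s hs => (hut y s hs).neg)
    (fun i s hs y => (hux i s hs y).neg) (fun i s hs y => (huxx i s hs y).neg)
    (fun s hs y => by
      simp only [Finset.sum_neg_distrib, sub_neg_eq_add, Odd.neg_pow (by decide : Odd 3)]
      linarith [hpde s hs y, (abs_le.mp (hg s hs y)).1]) t ht x
  exact abs_le.mpr ⟨by linarith, hupper⟩

end CubicHeat

/-- A maximum-principle a priori bound for the cubic heat equation on the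
three-dimensional unit torus (formulated for spatially 1-periodic functions on `ℝ³`): there is
a universal constant `C > 0` such that any continuous `u : [0,1] × ℝ³ → ℝ`, periodic in each
spatial coordinate, whose time derivative `ut` and second spatial partial derivatives `uxx i j`
exist and are continuous on `(0,1] × ℝ³` and which solves
`∂ₜ u - Δ u = -u³ + g` there for a bounded (by `Mg`) measurable `g`, satisfies
`|u(t,x)| ≤ C * max (t^(-1/2)) (Mg^(1/3))` for all `t ∈ (0,1]` and `x ∈ ℝ³`. -/
theorem cubic_heat_maximum_estimate :
    ∃ C : ℝ, 0 < C ∧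
      ∀ (u g ut : ℝ → (Fin 3 → ℝ) → ℝ)
        (ux : Fin 3 → ℝ → (Fin 3 → ℝ) → ℝ)
        (uxx : Fin 3 → Fin 3 → ℝ → (Fin 3 → ℝ) → ℝ) (Mg : ℝ),
        -- `u` is continuous on `[0,1] × ℝ³`
        ContinuousOn (fun p : ℝ × (Fin 3 → ℝ) => u p.1 p.2) (Icc (0:ℝ) 1 ×ˢ univ) →
        -- `u` is 1-periodic in each of the three spatial coordinates
        (∀ t : ℝ, ∀ x : Fin 3 → ℝ, ∀ i : Fin 3,
          u t (fun j => x j + if j = i then 1 else 0) = u t x) →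
        -- the time derivative `ut` of `u` exists on `(0,1] × ℝ³` …
        (∀ x : Fin 3 → ℝ, ∀ t ∈ Ioc (0:ℝ) 1,
          HasDerivWithinAt (fun s => u s x) (ut t x) (Ioc (0:ℝ) 1) t) →
        -- … and is continuous there
        ContinuousOn (fun p : ℝ × (Fin 3 → ℝ) => ut p.1 p.2) (Ioc (0:ℝ) 1 ×ˢ univ) →
        -- the first spatial partial derivatives `ux i` exist on `(0,1] × ℝ³`
        (∀ i : Fin 3, ∀ t ∈ Ioc (0:ℝ) 1, ∀ x : Fin 3 → ℝ,
          HasDerivAt (fun s => u t (Function.update x i s)) (ux i t x) (x i)) →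
        -- all second spatial partial derivatives `uxx i j = ∂ⱼ ∂ᵢ u` exist on `(0,1] × ℝ³` …
        (∀ i j : Fin 3, ∀ t ∈ Ioc (0:ℝ) 1, ∀ x : Fin 3 → ℝ,
          HasDerivAt (fun s => ux i t (Function.update x j s)) (uxx i j t x) (x j)) →
        -- … and are continuous there
        (∀ i j : Fin 3,
          ContinuousOn (fun p : ℝ × (Fin 3 → ℝ) => uxx i j p.1 p.2) (Ioc (0:ℝ) 1 ×ˢ univ)) →
        -- `g` is measurable and bounded by `Mg` on `(0,1] × ℝ³`
        Measurable (fun p : ℝ × (Fin 3 → ℝ) => g p.1 p.2) →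
        (∀ t ∈ Ioc (0:ℝ) 1, ∀ x : Fin 3 → ℝ, |g t x| ≤ Mg) →
        -- the PDE `∂ₜ u - Δ u = -u³ + g` holds on `(0,1] × ℝ³`
        (∀ t ∈ Ioc (0:ℝ) 1, ∀ x : Fin 3 → ℝ,
          ut t x - ∑ i : Fin 3, uxx i i t x = -(u t x) ^ 3 + g t x) →
        -- conclusion
        ∀ t ∈ Ioc (0:ℝ) 1, ∀ x : Fin 3 → ℝ,
          |u t x| ≤ C * max (t ^ (-(1:ℝ)/2)) (Mg ^ ((1:ℝ)/3)) := by
  refine ⟨2, two_pos, ?_⟩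
  rintro u g ut ux uxx Mg hu hper hut - hux huxx - - hg hpde t ht x
  have hper' : ∀ t x i, u t (x + Pi.single i 1) = u t x := fun t x i => by
    convert hper t x i using 2
    ext j
    simp [Pi.single_apply]
  have hbound := abs_le_rpow_neg_half_add_of_cubic_heat hu hper' hut hux (fun i => huxx i i) hg
    hpde t ht x
  linarith [le_max_left (t ^ (-(1:ℝ)/2)) (Mg ^ ((1:ℝ)/3)),
    le_max_right (t ^ (-(1:ℝ)/2)) (Mg ^ ((1:ℝ)/3))]
end

section
/- For every κ̄ ∈ (0, 1/2) there exists a constant C > 0 such that for every x ∈ ℝ³, all 0 < ε ≤ λ ≤ 1 and every ψ : ℝ³ → ℝ which is Lipschitz with Lipschitz constant at most 1, satisfies ‖ψ‖_∞ ≤ 1 and has support in the closed unit ball, one has ∫₀^ε ∫_{ℝ³} δ^{-3/2-κ̄} ( sup_{η ∈ 𝒩₀} | ∫_{ℝ³} Ψ_ε^λ(v) η_u^δ(v) dv | ) du dδ ≤ C ε^{1/2−κ̄} λ^{-1}. -/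
open MeasureTheory Set

/-- The grid cube `□_ε^y = {z : z - y ∈ [-ε/2, ε/2)³}` of side `ε` centred at `y`. -/
def gridCube (ε : ℝ) (y : EuclideanSpace ℝ (Fin 3)) : Set (EuclideanSpace ℝ (Fin 3)) :=
  {z | ∀ i : Fin 3, z i - y i ∈ Ico (-(ε / 2)) (ε / 2)}

/-- `latticeOf ε v` is the unique point `y ∈ εℤ³` with `v ∈ □_ε^y`. -/
noncomputable def latticeOf (ε : ℝ) (v : EuclideanSpace ℝ (Fin 3)) :
    EuclideanSpace ℝ (Fin 3) :=
  (EuclideanSpace.equiv (Fin 3) ℝ).symm fun i => ε * (⌊v i / ε + 1 / 2⌋ : ℤ)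

/-- The rescaled and recentred test function `f_x^λ(z) = λ⁻³ f((z - x)/λ)`. -/
noncomputable def scaledTest (f : EuclideanSpace ℝ (Fin 3) → ℝ)
    (x : EuclideanSpace ℝ (Fin 3)) (lam : ℝ) : EuclideanSpace ℝ (Fin 3) → ℝ :=
  fun z => (lam ^ 3)⁻¹ * f (lam⁻¹ • (z - x))

/-- `Ψ_ε^λ(v) = ψ_x^λ(v) - ε⁻³ ∫_{□_ε^{y_ε(v)}} ψ_x^λ(z) dz`, the difference between `ψ_x^λ`
and its average over the `ε`-grid cube containing the argument. -/
noncomputable def PsiDiff (ψ : EuclideanSpace ℝ (Fin 3) → ℝ)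
    (x : EuclideanSpace ℝ (Fin 3)) (lam ε : ℝ) : EuclideanSpace ℝ (Fin 3) → ℝ :=
  fun v => scaledTest ψ x lam v
    - (ε ^ 3)⁻¹ * ∫ z in gridCube ε (latticeOf ε v), scaledTest ψ x lam z

/-- The set `𝒩` of bounded measurable test functions supported in the closed Euclidean unit
ball and bounded by 1. -/
def testSet : Set (EuclideanSpace ℝ (Fin 3) → ℝ) :=
  {η | Measurable η ∧ (∀ v, |η v| ≤ 1) ∧ Function.support η ⊆ Metric.closedBall 0 1}

/-- The subset `𝒩₀ ⊆ 𝒩` of mean-zero test functions. -/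
def testSetZero : Set (EuclideanSpace ℝ (Fin 3) → ℝ) :=
  {η ∈ testSet | (∫ v, η v) = 0}

/-!
Fix a scale `δ ≤ ε`. As `ψ_x^λ` is `λ⁻⁴`-Lipschitz, `|Ψ_ε^λ| ≤ 2 ε λ⁻⁴`, and `Ψ_ε^λ` vanishes
outside `B(x, 3λ)`; since `‖η_u^δ‖_{L¹} ≤ 8`, every `u` contributes `O(ε λ⁻⁴)`, and only
`u ∈ B(x, 4λ)` contribute at all. If moreover `B(u, δ)` lies inside a single grid cube, then on
that ball `Ψ_ε^λ` is `ψ_x^λ` minus a constant, and the mean-zero condition on `η` lets us replace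
it by `ψ_x^λ - ψ_x^λ(u) = O(δ λ⁻⁴)`. The remaining `u` lie within `δ` of a grid face, a set of
measure `O(λ³ δ / ε)` in `B(x, 4λ)`. Hence the `u`-integral is `O(δ / λ)`, and integrating
`δ^{-1/2-κ̄}` over `(0, ε]` gives `ε^{1/2-κ̄} / λ`.
-/

open Metric
open scoped ENNReal

local notation "E3" => EuclideanSpace ℝ (Fin 3)

section Coordinates

variable {ι : Type*} [Fintype ι]

lemma EuclideanSpace.norm_le_sqrt_card_mul {r : ℝ} (hr : 0 ≤ r) {w : EuclideanSpace ℝ ι}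
    (h : ∀ i, |w i| ≤ r) : ‖w‖ ≤ √(Fintype.card ι) * r := by
  rw [EuclideanSpace.norm_eq, ← Real.sqrt_sq hr, ← Real.sqrt_mul (Nat.cast_nonneg _)]
  refine Real.sqrt_le_sqrt ?_
  calc ∑ i, ‖w i‖ ^ 2 ≤ ∑ _i : ι, r ^ 2 :=
        Finset.sum_le_sum fun i _ => by
          rw [Real.norm_eq_abs]; exact pow_le_pow_left₀ (abs_nonneg _) (h i) 2
    _ = Fintype.card ι * r ^ 2 := by simp

lemma EuclideanSpace.volume_setOf_forall_apply_mem (A : ι → Set ℝ) :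
    volume {z : EuclideanSpace ℝ ι | ∀ i, z i ∈ A i} = ∏ i, volume (A i) := by
  rw [← volume_pi_pi]
  convert (EuclideanSpace.volume_preserving_symm_measurableEquiv_toLp ι).measure_preimage_equiv
    (univ.pi A) using 2
  ext z
  simp

end Coordinates

lemma abs_sub_setAverage_le {α : Type*} [MeasurableSpace α] {μ : Measure α} {s : Set α}
    {f : α → ℝ} {c K : ℝ} (hs₀ : μ s ≠ 0) (hs : μ s ≠ ⊤) (hf : IntegrableOn f s μ)
    (h : ∀ z ∈ s, |c - f z| ≤ K) : |c - ⨍ z in s, f z ∂μ| ≤ K := by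
  have hm : 0 < μ.real s := ENNReal.toReal_pos hs₀ hs
  have hint : ‖∫ z in s, (c - f z) ∂μ‖ ≤ K * μ.real s :=
    norm_setIntegral_le_of_norm_le_const hs.lt_top h
  have havg : c - ⨍ z in s, f z ∂μ = (μ.real s)⁻¹ * ∫ z in s, (c - f z) ∂μ := by
    rw [setAverage_eq, smul_eq_mul, integral_sub (integrableOn_const hs (C := c)) hf,
      setIntegral_const, smul_eq_mul]
    field_simp
  rw [havg, abs_mul, abs_inv, abs_of_pos hm, inv_mul_le_iff₀ hm, mul_comm]
  exact hint

lemma lintegral_Ioc_rpow {q ε : ℝ} (hq : -1 < q) (hε : 0 ≤ ε) :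
    ∫⁻ t in Ioc 0 ε, ENNReal.ofReal (t ^ q) = ENNReal.ofReal (ε ^ (q + 1) / (q + 1)) := by
  have hint : IntegrableOn (fun t : ℝ => t ^ q) (Ioc 0 ε) :=
    (intervalIntegrable_iff_integrableOn_Ioc_of_le hε).1
      (intervalIntegral.intervalIntegrable_rpow' hq)
  rw [← ofReal_integral_eq_lintegral_ofReal hint
      ((ae_restrict_mem measurableSet_Ioc).mono fun t ht => Real.rpow_nonneg ht.1.le q),
    ← intervalIntegral.integral_of_le hε, integral_rpow (Or.inl hq),
    Real.zero_rpow (by linarith), sub_zero]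

lemma setLIntegral_Ioc_rpow_mul_le {α : Type*} [MeasurableSpace α] {μ : Measure α}
    {F : ℝ → α → ℝ} {p A ε : ℝ} (hp : -2 < p) (hε : 0 ≤ ε) (hA : 0 ≤ A)
    (hF : ∀ δ ∈ Ioc 0 ε, ∫⁻ u, ENNReal.ofReal (F δ u) ∂μ ≤ ENNReal.ofReal (A * δ)) :
    ∫⁻ δ in Ioc 0 ε, ∫⁻ u, ENNReal.ofReal (δ ^ p * F δ u) ∂μ
      ≤ ENNReal.ofReal (A * (ε ^ (p + 2) / (p + 2))) := by
  calc _ = ∫⁻ δ in Ioc 0 ε, ENNReal.ofReal (δ ^ p) * ∫⁻ u, ENNReal.ofReal (F δ u) ∂μ := by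
        refine setLIntegral_congr_fun measurableSet_Ioc fun δ hδ => ?_
        simp_rw [ENNReal.ofReal_mul (Real.rpow_nonneg hδ.1.le _)]
        exact lintegral_const_mul' _ _ ENNReal.ofReal_ne_top
    _ ≤ ∫⁻ δ in Ioc 0 ε, ENNReal.ofReal A * ENNReal.ofReal (δ ^ (p + 1)) := by
        refine setLIntegral_mono' measurableSet_Ioc fun δ hδ => ?_
        rw [← ENNReal.ofReal_mul hA, Real.rpow_add_one hδ.1.ne', ← mul_assoc, mul_comm A,
          mul_assoc, ENNReal.ofReal_mul (Real.rpow_nonneg hδ.1.le _)]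
        gcongr
        exact hF δ hδ
    _ = ENNReal.ofReal (A * (ε ^ (p + 2) / (p + 2))) := by
        rw [lintegral_const_mul' _ _ ENNReal.ofReal_ne_top, lintegral_Ioc_rpow (by linarith) hε,
          ← ENNReal.ofReal_mul hA, add_assoc, one_add_one_eq_two]

section GridFaces

variable {ε δ : ℝ}

lemma sub_mul_floor_mem_Ico (hε : 0 < ε) (t : ℝ) :
    t - ε * ⌊t / ε + 1 / 2⌋ ∈ Ico (-(ε / 2)) (ε / 2) := by
  have hlo := Int.floor_le (t / ε + 1 / 2)
  have hhi := Int.lt_floor_add_one (t / ε + 1 / 2)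
  have ht : t = ε * (t / ε) := by field_simp
  constructor <;> nlinarith

lemma floor_div_add_half_eq_of_sub_mem_Ico (hε : 0 < ε) {t : ℝ} {n : ℤ}
    (h : t - ε * n ∈ Ico (-(ε / 2)) (ε / 2)) : ⌊t / ε + 1 / 2⌋ = n := by
  obtain ⟨hlo, hhi⟩ := h
  rw [Int.floor_eq_iff, ← sub_le_iff_le_add, ← lt_sub_iff_add_lt, le_div_iff₀ hε,
    div_lt_iff₀ hε]
  constructor <;> nlinarith

/-- The points `ε (k + 1/2)` are the faces of the one-dimensional grid cells. -/
def gridFaceNbhd (ε δ : ℝ) : Set ℝ :=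
  ⋃ k : ℤ, Icc (ε * k + ε / 2 - δ) (ε * k + ε / 2 + δ)

lemma measurableSet_gridFaceNbhd : MeasurableSet (gridFaceNbhd ε δ) :=
  MeasurableSet.iUnion fun _ => measurableSet_Icc

lemma floor_div_add_half_eq_of_notMem_gridFaceNbhd (hε : 0 < ε) {s t : ℝ}
    (ht : t ∉ gridFaceNbhd ε δ) (hst : |s - t| ≤ δ) :
    ⌊s / ε + 1 / 2⌋ = ⌊t / ε + 1 / 2⌋ := by
  set n := ⌊t / ε + 1 / 2⌋
  obtain ⟨hlo, hhi⟩ := sub_mul_floor_mem_Ico hε t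
  have hface : ∀ k : ℤ, t ∉ Icc (ε * k + ε / 2 - δ) (ε * k + ε / 2 + δ) :=
    fun k hk => ht (mem_iUnion.2 ⟨k, hk⟩)
  have hlo' : ε * n - ε / 2 + δ < t := by
    by_contra! h
    exact hface (n - 1) ⟨by push_cast; linarith, by push_cast; linarith⟩
  have hhi' : t < ε * n + ε / 2 - δ := by
    by_contra! h
    exact hface n ⟨h, by linarith⟩
  rw [abs_le] at hst
  exact floor_div_add_half_eq_of_sub_mem_Ico hε ⟨by linarith, by linarith⟩

lemma card_Icc_ceil_floor_le {a b : ℝ} (hab : a ≤ b) :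
    ((Finset.Icc ⌈a⌉ ⌊b⌋).card : ℝ) ≤ b - a + 1 := by
  rw [Int.card_Icc, ← Int.cast_natCast, Int.toNat_eq_max, Int.cast_max]
  push_cast
  exact max_le (by linarith [Int.floor_le b, Int.le_ceil a]) (by linarith)

lemma volume_gridFaceNbhd_inter_Icc_le (hε : 0 < ε) (hδ : 0 ≤ δ) {c d : ℝ} (hcd : c ≤ d) :
    volume (gridFaceNbhd ε δ ∩ Icc c d) ≤ ENNReal.ofReal (2 * δ * ((d - c + 2 * δ) / ε + 1)) := by
  set I : ℤ → Set ℝ := fun k => Icc (ε * k + ε / 2 - δ) (ε * k + ε / 2 + δ)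
  set K := Finset.Icc ⌈(c - ε / 2 - δ) / ε⌉ ⌊(d - ε / 2 + δ) / ε⌋
  have hsub : gridFaceNbhd ε δ ∩ Icc c d ⊆ ⋃ k ∈ K, I k := by
    rintro t ⟨ht, htc, htd⟩
    obtain ⟨k, hk⟩ := mem_iUnion.1 ht
    refine mem_biUnion (Finset.mem_Icc.2 ⟨Int.ceil_le.2 ?_, Int.le_floor.2 ?_⟩) hk
    · rw [div_le_iff₀ hε]; linarith [hk.2]
    · rw [le_div_iff₀ hε]; linarith [hk.1]
  have hcard : (K.card : ℝ) ≤ (d - c + 2 * δ) / ε + 1 := by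
    refine (card_Icc_ceil_floor_le (div_le_div_of_nonneg_right (by linarith) hε.le)).trans_eq ?_
    ring
  calc volume (gridFaceNbhd ε δ ∩ Icc c d) ≤ ∑ k ∈ K, volume (I k) :=
        (measure_mono hsub).trans (measure_biUnion_finset_le K I)
    _ = ∑ _k ∈ K, ENNReal.ofReal (2 * δ) :=
        Finset.sum_congr rfl fun k _ => by rw [Real.volume_Icc]; ring_nf
    _ = ENNReal.ofReal K.card * ENNReal.ofReal (2 * δ) := by
        rw [Finset.sum_const, nsmul_eq_mul, ENNReal.ofReal_natCast]
    _ ≤ ENNReal.ofReal ((d - c + 2 * δ) / ε + 1) * ENNReal.ofReal (2 * δ) := by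
        gcongr
    _ = ENNReal.ofReal (2 * δ * ((d - c + 2 * δ) / ε + 1)) := by
        rw [← ENNReal.ofReal_mul (by positivity), mul_comm]

end GridFaces

section GridCubes

variable {ε δ : ℝ}

lemma mem_gridCube_latticeOf (hε : 0 < ε) (v : E3) : v ∈ gridCube ε (latticeOf ε v) :=
  fun i => sub_mul_floor_mem_Ico hε (v i)

lemma latticeOf_eq_of_forall_notMem_gridFaceNbhd (hε : 0 < ε) {u v : E3}
    (hu : ∀ i, u i ∉ gridFaceNbhd ε δ) (hv : v ∈ closedBall u δ) :
    latticeOf ε v = latticeOf ε u := by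
  ext i
  show ε * (⌊v i / ε + 1 / 2⌋ : ℝ) = ε * (⌊u i / ε + 1 / 2⌋ : ℝ)
  rw [floor_div_add_half_eq_of_notMem_gridFaceNbhd hε (hu i)]
  rw [mem_closedBall, dist_eq_norm] at hv
  exact (PiLp.norm_apply_le (v - u) i).trans hv

lemma norm_sub_le_of_mem_gridCube {y v z : E3} (hv : v ∈ gridCube ε y) (hz : z ∈ gridCube ε y) :
    ‖v - z‖ ≤ 2 * ε := by
  have hε : 0 ≤ ε := by linarith [(hv 0).1, (hv 0).2]
  have hcoord : ∀ i, |(v - z) i| ≤ ε := fun i => by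
    rw [PiLp.sub_apply, abs_le]
    constructor <;> linarith [(hv i).1, (hv i).2, (hz i).1, (hz i).2]
  calc ‖v - z‖ ≤ √(Fintype.card (Fin 3)) * ε :=
        EuclideanSpace.norm_le_sqrt_card_mul hε hcoord
    _ ≤ 2 * ε := by
        gcongr
        rw [Fintype.card_fin, Real.sqrt_le_iff]
        norm_num

lemma volume_gridCube (ε : ℝ) (y : E3) : volume (gridCube ε y) = ENNReal.ofReal ε ^ 3 := by
  have hcube : gridCube ε y = {z : E3 | ∀ i, z i ∈ Ico (y i - ε / 2) (y i + ε / 2)} := by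
    ext z
    refine forall_congr' fun i => ?_
    simp only [mem_Ico]
    constructor <;> rintro ⟨h₁, h₂⟩ <;> constructor <;> linarith
  rw [hcube, EuclideanSpace.volume_setOf_forall_apply_mem]
  simp only [Real.volume_Ico, add_sub_sub_cancel, add_halves, Finset.prod_const,
    Finset.card_univ, Fintype.card_fin]

end GridCubes

section ScaledTest

variable {f η : E3 → ℝ} {x u : E3} {lam δ : ℝ}

lemma support_scaledTest_subset (hf : Function.support f ⊆ closedBall 0 1) (hlam : 0 < lam) :
    Function.support (scaledTest f x lam) ⊆ closedBall x lam := by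
  intro z hz
  have hfz : lam⁻¹ • (z - x) ∈ closedBall 0 1 := hf (right_ne_zero_of_mul hz)
  rw [mem_closedBall, dist_zero_right, norm_smul, norm_inv, Real.norm_of_nonneg hlam.le,
    inv_mul_le_iff₀ hlam, mul_one] at hfz
  rwa [mem_closedBall, dist_eq_norm]

lemma scaledTest_eq_zero_of_notMem_closedBall (hf : Function.support f ⊆ closedBall 0 1)
    (hlam : 0 < lam) {z : E3} (hz : z ∉ closedBall x lam) : scaledTest f x lam z = 0 :=
  Function.notMem_support.1 fun h => hz (support_scaledTest_subset hf hlam h)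

lemma abs_scaledTest_le (hf : ∀ z, |f z| ≤ 1) (hlam : 0 < lam) (z : E3) :
    |scaledTest f x lam z| ≤ (lam ^ 3)⁻¹ := by
  rw [scaledTest, abs_mul, abs_of_pos (by positivity)]
  exact mul_le_of_le_one_right (by positivity) (hf _)

lemma abs_scaledTest_sub_le {K : NNReal} (hf : LipschitzWith K f) (hlam : 0 < lam) (a b : E3) :
    |scaledTest f x lam a - scaledTest f x lam b| ≤ K * ‖a - b‖ / lam ^ 4 := by
  have hdist : dist (lam⁻¹ • (a - x)) (lam⁻¹ • (b - x)) = lam⁻¹ * ‖a - b‖ := by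
    rw [dist_eq_norm, ← smul_sub, sub_sub_sub_cancel_right, norm_smul, norm_inv,
      Real.norm_of_nonneg hlam.le]
  have hf' := hf.dist_le_mul (lam⁻¹ • (a - x)) (lam⁻¹ • (b - x))
  rw [hdist, Real.dist_eq] at hf'
  rw [scaledTest, scaledTest, ← mul_sub, abs_mul, abs_of_pos (by positivity)]
  calc (lam ^ 3)⁻¹ * |f (lam⁻¹ • (a - x)) - f (lam⁻¹ • (b - x))|
      ≤ (lam ^ 3)⁻¹ * (K * (lam⁻¹ * ‖a - b‖)) := by gcongr
    _ = K * ‖a - b‖ / lam ^ 4 := by field_simp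

lemma Measurable.scaledTest (hf : Measurable f) (x : E3) (lam : ℝ) :
    Measurable (scaledTest f x lam) := by
  unfold _root_.scaledTest
  fun_prop

lemma MeasureTheory.Integrable.scaledTest (hf : Integrable f) (x : E3) (hlam : lam ≠ 0) :
    Integrable (scaledTest f x lam) :=
  ((hf.comp_smul (inv_ne_zero hlam)).comp_sub_right x).const_mul _

lemma integral_scaledTest (f : E3 → ℝ) (u : E3) (hδ : 0 < δ) :
    ∫ v, scaledTest f u δ v = ∫ v, f v := by
  simp only [scaledTest]
  rw [integral_const_mul, integral_sub_right_eq_self (fun v => f (δ⁻¹ • v)) u,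
    Measure.integral_comp_smul, finrank_euclideanSpace_fin, smul_eq_mul,
    abs_of_pos (by positivity), ← mul_assoc]
  field_simp

lemma integrable_of_mem_testSet (hη : η ∈ testSet) : Integrable η :=
  (integrableOn_iff_integrable_of_support_subset hη.2.2).1 <|
    Measure.integrableOn_of_bounded measure_closedBall_lt_top.ne hη.1.aestronglyMeasurable
      (ae_of_all _ hη.2.1)

lemma integral_abs_scaledTest_le (hη : η ∈ testSet) (hδ : 0 < δ) :
    ∫ v, |scaledTest η u δ v| ≤ 8 := by
  have habs : (fun v => |scaledTest η u δ v|) = scaledTest (fun z => |η z|) u δ := by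
    ext v
    rw [scaledTest, scaledTest, abs_mul, abs_of_pos (by positivity)]
  have hball : volume.real (closedBall (0 : E3) 1) ≤ 8 := by
    rw [measureReal_def, EuclideanSpace.volume_closedBall_fin_three, ENNReal.ofReal_one,
      one_pow, one_mul, ENNReal.toReal_ofReal (by positivity)]
    linarith [Real.pi_le_four]
  have hsupp : Function.support (fun z => |η z|) ⊆ closedBall 0 1 :=
    fun z hz => hη.2.2 (abs_ne_zero.1 hz)
  calc ∫ v, |scaledTest η u δ v| = ∫ z in closedBall 0 1, |η z| := by
        rw [habs, integral_scaledTest _ u hδ, setIntegral_eq_integral_of_forall_compl_eq_zero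
          fun z hz => Function.notMem_support.1 fun h => hz (hsupp h)]
    _ ≤ 1 * volume.real (closedBall (0 : E3) 1) := by
        have h := norm_setIntegral_le_of_norm_le_const (f := fun z => |η z|) (C := 1)
          (measure_closedBall_lt_top (μ := volume) (x := 0) (r := 1))
          fun z _ => by simpa using hη.2.1 z
        exact (le_abs_self _).trans h
    _ ≤ 8 := by linarith

lemma abs_integral_mul_scaledTest_le {g : E3 → ℝ} {K : ℝ} (hη : η ∈ testSet) (hδ : 0 < δ)
    (hK : ∀ v ∈ closedBall u δ, |g v| ≤ K) :
    |∫ v, g v * scaledTest η u δ v| ≤ 8 * K := by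
  have hK0 : 0 ≤ K := (abs_nonneg _).trans (hK u (mem_closedBall_self hδ.le))
  have hpoint : ∀ v, |g v * scaledTest η u δ v| ≤ K * |scaledTest η u δ v| := fun v => by
    rw [abs_mul]
    by_cases hv : v ∈ closedBall u δ
    · exact mul_le_mul_of_nonneg_right (hK v hv) (abs_nonneg _)
    · rw [scaledTest_eq_zero_of_notMem_closedBall hη.2.2 hδ hv, abs_zero, mul_zero, mul_zero]
  calc |∫ v, g v * scaledTest η u δ v| ≤ ∫ v, |g v * scaledTest η u δ v| :=
        abs_integral_le_integral_abs
    _ ≤ ∫ v, K * |scaledTest η u δ v| :=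
        integral_mono_of_nonneg (ae_of_all _ fun _ => abs_nonneg _)
          (((integrable_of_mem_testSet hη).scaledTest u hδ.ne').abs.const_mul K)
          (ae_of_all _ hpoint)
    _ ≤ 8 * K := by
        rw [integral_const_mul, mul_comm]
        exact mul_le_mul_of_nonneg_right (integral_abs_scaledTest_le hη hδ) hK0

lemma integral_mul_scaledTest_congr {g h : E3 → ℝ} (hη : Function.support η ⊆ closedBall 0 1)
    (hδ : 0 < δ) (hgh : EqOn g h (closedBall u δ)) :
    ∫ v, g v * scaledTest η u δ v = ∫ v, h v * scaledTest η u δ v := by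
  refine integral_congr_ae (ae_of_all _ fun v => ?_)
  by_cases hv : v ∈ closedBall u δ
  · simp only [hgh hv]
  · simp only [scaledTest_eq_zero_of_notMem_closedBall hη hδ hv, mul_zero]

lemma integral_sub_const_mul_scaledTest {g : E3 → ℝ} (hη : η ∈ testSetZero) (hδ : 0 < δ)
    (hg : Integrable fun v => g v * scaledTest η u δ v) (c : ℝ) :
    ∫ v, (g v - c) * scaledTest η u δ v = ∫ v, g v * scaledTest η u δ v := by
  simp only [sub_mul]
  rw [integral_sub hg (((integrable_of_mem_testSet hη.1).scaledTest u hδ.ne').const_mul c),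
    integral_const_mul, integral_scaledTest η u hδ, hη.2, mul_zero, sub_zero]

end ScaledTest

section PsiDiff

variable {ψ η : E3 → ℝ} {x u : E3} {lam ε δ : ℝ}

lemma PsiDiff_eq_sub_setAverage (hε : 0 < ε) (v : E3) :
    PsiDiff ψ x lam ε v
      = scaledTest ψ x lam v - ⨍ z in gridCube ε (latticeOf ε v), scaledTest ψ x lam z := by
  rw [setAverage_eq, measureReal_def, volume_gridCube, ← ENNReal.ofReal_pow hε.le,
    ENNReal.toReal_ofReal (by positivity), smul_eq_mul]
  rfl

lemma abs_PsiDiff_le (hψ : LipschitzWith 1 ψ) (hψi : Integrable ψ) (hε : 0 < ε) (hlam : 0 < lam)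
    (v : E3) : |PsiDiff ψ x lam ε v| ≤ 2 * ε / lam ^ 4 := by
  rw [PsiDiff_eq_sub_setAverage hε]
  refine abs_sub_setAverage_le (by simp [volume_gridCube, hε]) (by simp [volume_gridCube])
    (hψi.scaledTest x hlam.ne').integrableOn fun z hz => ?_
  calc |scaledTest ψ x lam v - scaledTest ψ x lam z| ≤ 1 * ‖v - z‖ / lam ^ 4 :=
        abs_scaledTest_sub_le hψ hlam v z
    _ ≤ 2 * ε / lam ^ 4 := by
        rw [one_mul]
        gcongr
        exact norm_sub_le_of_mem_gridCube (mem_gridCube_latticeOf hε v) hz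

lemma PsiDiff_eq_zero_of_lt_norm (hψs : Function.support ψ ⊆ closedBall 0 1) (hε : 0 < ε)
    (hlam : 0 < lam) {v : E3} (hv : lam + 2 * ε < ‖v - x‖) : PsiDiff ψ x lam ε v = 0 := by
  have hfar : ∀ z, ‖v - z‖ ≤ 2 * ε → scaledTest ψ x lam z = 0 := fun z hz => by
    refine scaledTest_eq_zero_of_notMem_closedBall hψs hlam ?_
    rw [mem_closedBall, dist_eq_norm, not_le]
    linarith [norm_sub_le_norm_sub_add_norm_sub v z x]
  have hcube : ∫ z in gridCube ε (latticeOf ε v), scaledTest ψ x lam z = 0 :=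
    setIntegral_eq_zero_of_forall_eq_zero fun z hz =>
      hfar z (norm_sub_le_of_mem_gridCube (mem_gridCube_latticeOf hε v) hz)
  rw [PsiDiff, hcube, hfar v (by rw [sub_self, norm_zero]; positivity), mul_zero, sub_zero]

lemma abs_integral_PsiDiff_mul_scaledTest_le_of_forall_notMem (hψ : LipschitzWith 1 ψ)
    (hψi : Integrable ψ) (hε : 0 < ε) (hlam : 0 < lam) (hδ : 0 < δ) (hη : η ∈ testSetZero)
    (hu : ∀ i, u i ∉ gridFaceNbhd ε δ) :
    |∫ v, PsiDiff ψ x lam ε v * scaledTest η u δ v| ≤ 8 * (δ / lam ^ 4) := by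
  set φ := scaledTest ψ x lam
  have hint : Integrable fun v => φ v * scaledTest η u δ v :=
    (hψi.scaledTest x hlam.ne').mul_bdd (hη.1.1.scaledTest u δ).aestronglyMeasurable
      (ae_of_all _ fun v => by rw [Real.norm_eq_abs]; exact abs_scaledTest_le hη.1.2.1 hδ v)
  have hball : EqOn (PsiDiff ψ x lam ε)
      (fun v => φ v - (ε ^ 3)⁻¹ * ∫ z in gridCube ε (latticeOf ε u), φ z) (closedBall u δ) :=
    fun v hv => by
      simp only [PsiDiff, latticeOf_eq_of_forall_notMem_gridFaceNbhd hε hu hv, φ]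
  rw [integral_mul_scaledTest_congr hη.1.2.2 hδ hball, integral_sub_const_mul_scaledTest hη hδ hint,
    ← integral_sub_const_mul_scaledTest hη hδ hint (φ u)]
  refine abs_integral_mul_scaledTest_le hη.1 hδ fun v hv => ?_
  calc |φ v - φ u| ≤ 1 * ‖v - u‖ / lam ^ 4 := abs_scaledTest_sub_le hψ hlam v u
    _ ≤ δ / lam ^ 4 := by
        rw [one_mul, ← dist_eq_norm]
        gcongr
        exact hv

end PsiDiff

section Besov

variable {ψ η : E3 → ℝ} {x u : E3} {lam ε δ r : ℝ}

def coordBox (x : E3) (r : ℝ) : Set E3 := {z | ∀ i, z i ∈ Icc (x i - r) (x i + r)}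

def nearGridFaces (ε δ : ℝ) : Set E3 := ⋃ i, (fun u : E3 => u i) ⁻¹' gridFaceNbhd ε δ

lemma closedBall_subset_coordBox (x : E3) (r : ℝ) : closedBall x r ⊆ coordBox x r := by
  intro z hz i
  rw [mem_closedBall, dist_eq_norm] at hz
  have hi := (PiLp.norm_apply_le (z - x) i).trans hz
  rw [PiLp.sub_apply, Real.norm_eq_abs, abs_le] at hi
  constructor <;> linarith [hi.1, hi.2]

lemma volume_coordBox (x : E3) (hr : 0 ≤ r) :
    volume (coordBox x r) = ENNReal.ofReal ((2 * r) ^ 3) := by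
  rw [coordBox, EuclideanSpace.volume_setOf_forall_apply_mem, ENNReal.ofReal_pow (by positivity)]
  simp only [Real.volume_Icc, add_sub_sub_cancel, ← two_mul, Finset.prod_const, Finset.card_univ,
    Fintype.card_fin]

lemma measurableSet_nearGridFaces : MeasurableSet (nearGridFaces ε δ) :=
  MeasurableSet.iUnion fun _ => measurableSet_gridFaceNbhd.preimage (by fun_prop)

lemma volume_preimage_gridFaceNbhd_inter_coordBox_le (hε : 0 < ε) (hδ : 0 ≤ δ) (hr : 0 ≤ r)
    (i : Fin 3) :
    volume ((fun u : E3 => u i) ⁻¹' gridFaceNbhd ε δ ∩ coordBox x r)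
      ≤ ENNReal.ofReal (2 * δ * ((2 * r + 2 * δ) / ε + 1)) * ENNReal.ofReal (2 * r) ^ 2 := by
  set I : Fin 3 → Set ℝ := fun j => Icc (x j - r) (x j + r)
  have hsub : (fun u : E3 => u i) ⁻¹' gridFaceNbhd ε δ ∩ coordBox x r
      ⊆ {z | ∀ j, z j ∈ Function.update I i (gridFaceNbhd ε δ ∩ I i) j} := by
    rintro z ⟨hz, hbox⟩ j
    rcases eq_or_ne j i with rfl | hj
    · rw [Function.update_self]; exact ⟨hz, hbox j⟩
    · rw [Function.update_of_ne hj]; exact hbox j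
  refine (measure_mono hsub).trans ?_
  rw [EuclideanSpace.volume_setOf_forall_apply_mem,
    Finset.prod_eq_mul_prod_sdiff_singleton_of_mem (Finset.mem_univ i), Function.update_self]
  have hface := volume_gridFaceNbhd_inter_Icc_le hε hδ (by linarith : x i - r ≤ x i + r)
  rw [show x i + r - (x i - r) = 2 * r by ring] at hface
  have hrest : ∏ j ∈ Finset.univ \ {i}, volume (Function.update I i (gridFaceNbhd ε δ ∩ I i) j)
      = ENNReal.ofReal (2 * r) ^ 2 := by
    rw [Finset.prod_congr rfl (g := fun _ => ENNReal.ofReal (2 * r)) fun j hj => by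
      rw [Function.update_of_ne (by simpa using hj), Real.volume_Icc]; ring_nf]
    rw [Finset.prod_const, Finset.card_sdiff_of_subset (Finset.subset_univ _)]
    simp
  exact mul_le_mul' hface hrest.le

lemma volume_nearGridFaces_inter_coordBox_le (hε : 0 < ε) (hδ : 0 ≤ δ) (hδε : δ ≤ ε)
    (hεr : ε ≤ r) :
    volume (nearGridFaces ε δ ∩ coordBox x r) ≤ ENNReal.ofReal (120 * r ^ 3 * δ / ε) := by
  have hr : 0 < r := hε.trans_le hεr
  set a := 2 * δ * ((2 * r + 2 * δ) / ε + 1)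
  have ha₀ : 0 ≤ a := by positivity
  have ha : a ≤ 2 * δ * (5 * r / ε) := by
    show 2 * δ * ((2 * r + 2 * δ) / ε + 1) ≤ _
    gcongr
    rw [div_add_one hε.ne']
    gcongr
    linarith
  calc volume (nearGridFaces ε δ ∩ coordBox x r)
      ≤ ∑ i, volume ((fun u : E3 => u i) ⁻¹' gridFaceNbhd ε δ ∩ coordBox x r) := by
        rw [nearGridFaces, iUnion_inter]
        exact measure_iUnion_fintype_le _ _
    _ ≤ ∑ _i : Fin 3, ENNReal.ofReal a * ENNReal.ofReal (2 * r) ^ 2 :=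
        Finset.sum_le_sum fun i _ =>
          volume_preimage_gridFaceNbhd_inter_coordBox_le hε hδ hr.le i
    _ = ENNReal.ofReal (3 * a * (2 * r) ^ 2) := by
        rw [Finset.sum_const, Finset.card_univ, Fintype.card_fin, nsmul_eq_mul, Nat.cast_ofNat,
          ENNReal.ofReal_mul (by positivity : (0 : ℝ) ≤ 3 * a),
          ENNReal.ofReal_mul (by norm_num : (0 : ℝ) ≤ 3), ENNReal.ofReal_pow (by positivity),
          ENNReal.ofReal_ofNat, mul_assoc]
    _ ≤ ENNReal.ofReal (120 * r ^ 3 * δ / ε) := by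
        refine ENNReal.ofReal_le_ofReal ((mul_le_mul_of_nonneg_right
          (mul_le_mul_of_nonneg_left ha (by norm_num)) (by positivity)).trans_eq ?_)
        ring

lemma iSup_abs_integral_PsiDiff_mul_scaledTest_le (hψ : LipschitzWith 1 ψ) (hψi : Integrable ψ)
    (hψs : Function.support ψ ⊆ closedBall 0 1) (hε : 0 < ε) (hεlam : ε ≤ lam) (hδ : 0 < δ)
    (hδε : δ ≤ ε) (u : E3) :
    ⨆ η ∈ testSetZero, |∫ v, PsiDiff ψ x lam ε v * scaledTest η u δ v|
      ≤ (closedBall x (4 * lam)).indicator (fun _ => 8 * (δ / lam ^ 4)) u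
        + (nearGridFaces ε δ ∩ closedBall x (4 * lam)).indicator
            (fun _ => 8 * (2 * ε / lam ^ 4)) u := by
  have hlam : 0 < lam := hε.trans_le hεlam
  have hnonneg : 0 ≤ (closedBall x (4 * lam)).indicator (fun _ => 8 * (δ / lam ^ 4)) u
      + (nearGridFaces ε δ ∩ closedBall x (4 * lam)).indicator (fun _ => 8 * (2 * ε / lam ^ 4)) u :=
    add_nonneg (indicator_nonneg (fun _ _ => by positivity) u)
      (indicator_nonneg (fun _ _ => by positivity) u)
  refine Real.iSup_le (fun η => Real.iSup_le (fun hη => ?_) hnonneg) hnonneg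
  by_cases hu : u ∈ closedBall x (4 * lam)
  · rw [indicator_of_mem hu]
    by_cases hN : u ∈ nearGridFaces ε δ
    · rw [indicator_of_mem (mem_inter hN hu)]
      refine le_add_of_nonneg_of_le (by positivity) ?_
      exact abs_integral_mul_scaledTest_le hη.1 hδ fun v _ => abs_PsiDiff_le hψ hψi hε hlam v
    · rw [indicator_of_notMem fun h => hN h.1, add_zero]
      exact abs_integral_PsiDiff_mul_scaledTest_le_of_forall_notMem hψ hψi hε hlam hδ hη
        fun i hi => hN (mem_iUnion.2 ⟨i, hi⟩)
  · rw [indicator_of_notMem hu, indicator_of_notMem fun h => hu h.2, add_zero]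
    refine (abs_integral_mul_scaledTest_le (K := 0) hη.1 hδ fun v hv => ?_).trans_eq (mul_zero _)
    rw [mem_closedBall, dist_eq_norm, not_le] at hu
    rw [mem_closedBall, dist_eq_norm] at hv
    rw [PsiDiff_eq_zero_of_lt_norm hψs hε hlam, abs_zero]
    linarith [norm_sub_le_norm_sub_add_norm_sub u v x, norm_sub_rev u v]

lemma lintegral_iSup_abs_integral_PsiDiff_mul_scaledTest_le (hψ : LipschitzWith 1 ψ)
    (hψi : Integrable ψ) (hψs : Function.support ψ ⊆ closedBall 0 1) (hε : 0 < ε)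
    (hεlam : ε ≤ lam) (hδ : 0 < δ) (hδε : δ ≤ ε) :
    ∫⁻ u, ENNReal.ofReal (⨆ η ∈ testSetZero, |∫ v, PsiDiff ψ x lam ε v * scaledTest η u δ v|)
      ≤ ENNReal.ofReal (2 ^ 17 / lam * δ) := by
  have hlam : 0 < lam := hε.trans_le hεlam
  set B := closedBall x (4 * lam)
  set N := nearGridFaces ε δ ∩ B
  have hpoint : ∀ u, ENNReal.ofReal
      (⨆ η ∈ testSetZero, |∫ v, PsiDiff ψ x lam ε v * scaledTest η u δ v|)
      ≤ B.indicator (fun _ => ENNReal.ofReal (8 * (δ / lam ^ 4))) u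
        + N.indicator (fun _ => ENNReal.ofReal (8 * (2 * ε / lam ^ 4))) u := fun u => by
    refine (ENNReal.ofReal_le_ofReal (iSup_abs_integral_PsiDiff_mul_scaledTest_le hψ hψi hψs hε
      hεlam hδ hδε u)).trans (ENNReal.ofReal_add_le.trans_eq ?_)
    congr 1 <;> exact (congrFun (indicator_comp_of_zero ENNReal.ofReal_zero) u).symm
  calc _ ≤ ∫⁻ u, (B.indicator (fun _ => ENNReal.ofReal (8 * (δ / lam ^ 4))) u
        + N.indicator (fun _ => ENNReal.ofReal (8 * (2 * ε / lam ^ 4))) u) := lintegral_mono hpoint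
    _ = ENNReal.ofReal (8 * (δ / lam ^ 4)) * volume B
        + ENNReal.ofReal (8 * (2 * ε / lam ^ 4)) * volume N := by
        rw [lintegral_add_left (measurable_const.indicator measurableSet_closedBall),
          lintegral_indicator_const measurableSet_closedBall,
          lintegral_indicator_const (measurableSet_nearGridFaces.inter measurableSet_closedBall)]
    _ ≤ ENNReal.ofReal (8 * (δ / lam ^ 4)) * ENNReal.ofReal ((2 * (4 * lam)) ^ 3)
        + ENNReal.ofReal (8 * (2 * ε / lam ^ 4))
          * ENNReal.ofReal (120 * (4 * lam) ^ 3 * δ / ε) := by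
        gcongr
        · exact (measure_mono (closedBall_subset_coordBox x _)).trans
            (volume_coordBox x (by positivity)).le
        · exact (measure_mono (inter_subset_inter_right _ (closedBall_subset_coordBox x _))).trans
            (volume_nearGridFaces_inter_coordBox_le hε hδ.le hδε (by linarith))
    _ = ENNReal.ofReal (126976 / lam * δ) := by
        rw [← ENNReal.ofReal_mul (by positivity), ← ENNReal.ofReal_mul (by positivity),
          ← ENNReal.ofReal_add (by positivity) (by positivity)]
        congr 1
        field_simp
        ring
    _ ≤ ENNReal.ofReal (2 ^ 17 / lam * δ) := by
        gcongr
        norm_num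

end Besov

/-- Small-scale regime (`δ ≤ ε`) of the Besov `B^{1/2+κ̄}_{1,1}` bound on
`Ψ_ε^λ`: testing against mean-zero rescaled test functions `η_u^δ` at scales `δ ≤ ε` yields a
total contribution of order `ε^{1/2-κ̄} λ⁻¹`. -/
theorem besov_bound_small_scales :
    ∀ κb : ℝ, κb ∈ Ioo (0 : ℝ) (1 / 2) →
      ∃ C : ℝ, 0 < C ∧
        ∀ (x : EuclideanSpace ℝ (Fin 3)) (ε lam : ℝ), 0 < ε → ε ≤ lam → lam ≤ 1 →
          ∀ ψ : EuclideanSpace ℝ (Fin 3) → ℝ,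
            LipschitzWith 1 ψ → (∀ z, |ψ z| ≤ 1) →
            Function.support ψ ⊆ Metric.closedBall 0 1 →
            (∫⁻ δ in Ioc (0 : ℝ) ε, ∫⁻ u : EuclideanSpace ℝ (Fin 3),
                ENNReal.ofReal (δ ^ (-(3 : ℝ) / 2 - κb) *
                  ⨆ η ∈ testSetZero, |∫ v, PsiDiff ψ x lam ε v * scaledTest η u δ v|))
              ≤ ENNReal.ofReal (C * ε ^ ((1 : ℝ) / 2 - κb) * lam⁻¹) := by
  rintro κb ⟨hκ₀, hκ₁⟩
  have hs : 0 < 1 / 2 - κb := sub_pos.2 hκ₁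
  refine ⟨2 ^ 17 / (1 / 2 - κb), by positivity, fun x ε lam hε hεlam _ ψ hψ hψb hψs => ?_⟩
  have hlam : 0 < lam := hε.trans_le hεlam
  have hψi : Integrable ψ := integrable_of_mem_testSet ⟨hψ.continuous.measurable, hψb, hψs⟩
  refine (setLIntegral_Ioc_rpow_mul_le (by linarith) hε.le (by positivity) fun δ hδ =>
    lintegral_iSup_abs_integral_PsiDiff_mul_scaledTest_le hψ hψi hψs hε hεlam hδ.1 hδ.2).trans_eq ?_
  rw [show -(3 : ℝ) / 2 - κb + 2 = 1 / 2 - κb by ring]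
  congr 1
  field_simp
end
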